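/- arXiv:2503.20380 — 3 statements merged into one kernel-verified Lean document; each statement's English description precedes it below -/
import Mathlib

section
/- For all real numbers u, v ≥ 0 and any real z, and any exponent q with 1 < q ≤ 2, one has |u + v + z|^q - u^q - v^q ≤ q·|z|·(u+v)^(q-1) + |z|^q + q·v·u^(q-1). -/
/-!
For `a, b ≥ 0` and `1 ≤ q ≤ 2`, the remainder `a^q + q a^(q-1) t + t^q - (a + t)^q` vanishes at
`t = 0` and is nondecreasing on `t ≥ 0`, since its derivative `q (a^(q-1) + t^(q-1) - (a+t)^(q-1))`
is nonnegative by subadditivity of `s ↦ s^(q-1)`. This gives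
`(a + b)^q ≤ a^q + q a^(q-1) b + b^q`. Bounding `|u + v + z| ≤ (u + v) + |z|`, we apply it once
with increment `|z|` at base `u + v`, then once more to `(u + v)^q` with increment `v` at base `u`.
-/

open Real Set

theorem Real.add_rpow_le_rpow_add_mul_add_rpow {a b q : ℝ} (ha : 0 ≤ a) (hb : 0 ≤ b)
    (hq1 : 1 ≤ q) (hq2 : q ≤ 2) :
    (a + b) ^ q ≤ a ^ q + q * a ^ (q - 1) * b + b ^ q := by
  set f : ℝ → ℝ := fun t ↦ a ^ q + q * a ^ (q - 1) * t + t ^ q - (a + t) ^ q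
  have hderiv (t : ℝ) : HasDerivAt f
      (q * a ^ (q - 1) + q * t ^ (q - 1) - q * (a + t) ^ (q - 1)) t := by
    have hlin := ((hasDerivAt_id' t).const_mul (q * a ^ (q - 1))).const_add (a ^ q)
    have hpow := (hasDerivAt_id' t).rpow_const (p := q) (Or.inr hq1)
    have hshift := ((hasDerivAt_id' t).const_add a).rpow_const (p := q) (Or.inr hq1)
    exact ((hlin.add hpow).sub hshift).congr_deriv (by ring)
  have hmono : MonotoneOn f (Ici 0) := by
    refine monotoneOn_of_hasDerivWithinAt_nonneg (convex_Ici 0)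
      (fun t _ ↦ (hderiv t).continuousAt.continuousWithinAt)
      (fun t _ ↦ (hderiv t).hasDerivWithinAt) fun t ht ↦ ?_
    rw [interior_Ici] at ht
    have hsub : (a + t) ^ (q - 1) ≤ a ^ (q - 1) + t ^ (q - 1) :=
      rpow_add_le_add_rpow ha ht.le (by linarith) (by linarith)
    nlinarith
  have hf0 : f 0 = 0 := by
    simp [f, zero_rpow (by linarith : q ≠ 0)]
  have hfb := hmono self_mem_Ici hb hb
  simp only [hf0, f] at hfb
  linarith

theorem stmt_0 (u v z q : ℝ) (hu : 0 ≤ u) (hv : 0 ≤ v) (hq1 : 1 < q) (hq2 : q ≤ 2) :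
    |u + v + z| ^ q - u ^ q - v ^ q ≤
      q * |z| * (u + v) ^ (q - 1) + |z| ^ q + q * v * u ^ (q - 1) := by
  have huv : 0 ≤ u + v := add_nonneg hu hv
  have habs : |u + v + z| ≤ (u + v) + |z| := by
    simpa [abs_of_nonneg huv] using abs_add_le (u + v) z
  have h1 : |u + v + z| ^ q ≤ ((u + v) + |z|) ^ q :=
    rpow_le_rpow (abs_nonneg _) habs (by linarith)
  have h2 := add_rpow_le_rpow_add_mul_add_rpow huv (abs_nonneg z) hq1.le hq2
  have h3 := add_rpow_le_rpow_add_mul_add_rpow hu hv hq1.le hq2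
  linarith
end

section
/- Let (ξ, ξ*) be i.i.d. real random variables, κ > 0, ρ ∈ (0,1), and set c = ρ^{-1/2}. For nonnegative integers a ≤ b define τ(a,b) = ∑_{i ≥ a} ∑_{j ≥ b} E(min(κ ρ^{i+j} |ξ − ξ*|, 1)). Then there exists a constant K > 0 (depending on κ and ρ) such that τ(a,b) ≤ K ρ^{(a+b)/2} + K · E((log|ξ − ξ*|)² · 1_{log|ξ − ξ*| > max(a,b)·log c}). -/
/-!
Put `t = κ ρ^(a+b) |ξ - ξ*|`. By monotone convergence the double series is `E S(t)`, where
`S(t) = ∑_{i,j} min (t ρ^(i+j)) 1` is linear near `0` and quadratic in `log t` at infinity: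
`S(t) ≤ t / (1-ρ)²`, `S(t) ≤ (log⁺ t / |log ρ| + O(1))²` and `S(t) ≥ (log t / (2 |log ρ|) - 1)²`.
Where `|ξ - ξ*| ≤ c ^ max(a,b)` the linear bound gives `O(ρ^((a+b)/2))`. Elsewhere the logarithmic
bound gives `O((log |ξ - ξ*|)²)` plus a constant, which `ρ^((a+b)/2)` absorbs when `a = b = 0`
and `(log |ξ - ξ*|)² > (log c)²` absorbs otherwise.

The lower bound on `S` shows that the series diverges whenever the truncated second logarithmic
moment is infinite. This case must be handled because a divergent `tsum` and the Bochner integral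
of a non-integrable function are both `0`.
-/

open MeasureTheory ProbabilityTheory
open scoped ENNReal

lemma ENNReal.tsum_tsum_toReal_add {h : ℕ → ℝ≥0∞} (hh : ∀ n, h n ≠ ∞) :
    ∑' i, ∑' j, (h (i + j)).toReal = (∑' i, ∑' j, h (i + j)).toReal := by
  by_cases htop : ∑' n, h n = ∞
  · -- every row is a tail of `h`, so it diverges too and contributes `toReal ∞ = 0`
    have hrow : ∀ i, ∑' j, h (i + j) = ∞ := fun i => by
      have hsplit := ENNReal.summable.sum_add_tsum_nat_add' (f := h) (k := i)
      simp_rw [add_comm _ i] at hsplit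
      rw [← hsplit, ENNReal.add_eq_top] at htop
      exact htop.resolve_left (ENNReal.sum_ne_top.2 fun n _ => hh n)
    simp [← ENNReal.tsum_toReal_eq fun j => hh _, hrow]
  · have hrow : ∀ i, ∑' j, h (i + j) ≠ ∞ := fun i =>
      ne_top_of_le_ne_top htop (ENNReal.tsum_comp_le_tsum_of_injective (add_right_injective i) h)
    rw [ENNReal.tsum_toReal_eq hrow]
    exact tsum_congr fun i => (ENNReal.tsum_toReal_eq fun j => hh _).symm

lemma ENNReal.toReal_le_add_mul_toReal {Φ J : ℝ≥0∞} {A B : ℝ} (hA : 0 ≤ A) (hB : 0 ≤ B)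
    (hΦ : Φ ≤ ENNReal.ofReal A + ENNReal.ofReal B * J) (hJ : J = ∞ → Φ = ∞) :
    Φ.toReal ≤ A + B * J.toReal := by
  by_cases hJtop : J = ∞
  · simp [hJ hJtop, hJtop, hA]
  · have hfin : ENNReal.ofReal A + ENNReal.ofReal B * J ≠ ∞ := by finiteness
    calc Φ.toReal ≤ (ENNReal.ofReal A + ENNReal.ofReal B * J).toReal := ENNReal.toReal_mono hfin hΦ
      _ = A + B * J.toReal := by
        rw [ENNReal.toReal_add (by finiteness) (by finiteness), ENNReal.toReal_mul,
          ENNReal.toReal_ofReal hA, ENNReal.toReal_ofReal hB]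

noncomputable def clippedGeomSum (ρ t : ℝ) : ℝ≥0∞ :=
  ∑' i : ℕ, ∑' j : ℕ, ENNReal.ofReal (min (t * ρ ^ (i + j)) 1)

section clippedGeomSum

variable {ρ : ℝ}

lemma tsum_ofReal_pow (h0 : 0 ≤ ρ) (h1 : ρ < 1) :
    ∑' i : ℕ, ENNReal.ofReal (ρ ^ i) = ENNReal.ofReal (1 - ρ)⁻¹ := by
  rw [← ENNReal.ofReal_tsum_of_nonneg (fun i => by positivity) (summable_geometric_of_lt_one h0 h1),
    tsum_geometric_of_lt_one h0 h1]

lemma tsum_ofReal_pow_tsub (h0 : 0 ≤ ρ) (h1 : ρ < 1) (m : ℕ) :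
    ∑' i : ℕ, ENNReal.ofReal (ρ ^ (i - m)) = m + ENNReal.ofReal (1 - ρ)⁻¹ := by
  rw [← ENNReal.summable.sum_add_tsum_nat_add' (k := m), ← tsum_ofReal_pow h0 h1]
  congr 1
  · rw [Finset.sum_congr rfl fun i hi => by
      rw [Nat.sub_eq_zero_of_le (Finset.mem_range.1 hi).le, pow_zero, ENNReal.ofReal_one]]
    simp
  · simp

lemma clippedGeomSum_mono (h0 : 0 ≤ ρ) {s t : ℝ} (hst : s ≤ t) :
    clippedGeomSum ρ s ≤ clippedGeomSum ρ t :=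
  ENNReal.tsum_le_tsum fun _ => ENNReal.tsum_le_tsum fun _ => ENNReal.ofReal_le_ofReal <|
    min_le_min_right 1 (mul_le_mul_of_nonneg_right hst (by positivity))

lemma clippedGeomSum_le_mul (h0 : 0 ≤ ρ) (h1 : ρ < 1) {t : ℝ} (ht : 0 ≤ t) :
    clippedGeomSum ρ t ≤ ENNReal.ofReal (t * ((1 - ρ)⁻¹) ^ 2) := by
  calc clippedGeomSum ρ t
      ≤ ∑' i : ℕ, ∑' j : ℕ, ENNReal.ofReal t * ENNReal.ofReal (ρ ^ i) * ENNReal.ofReal (ρ ^ j) :=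
        ENNReal.tsum_le_tsum fun i => ENNReal.tsum_le_tsum fun j => by
          rw [← ENNReal.ofReal_mul ht, ← ENNReal.ofReal_mul (by positivity), mul_assoc, ← pow_add]
          exact ENNReal.ofReal_le_ofReal (min_le_left _ _)
    _ = ENNReal.ofReal (t * ((1 - ρ)⁻¹) ^ 2) := by
        simp only [ENNReal.tsum_mul_left, ENNReal.tsum_mul_right, tsum_ofReal_pow h0 h1]
        rw [ENNReal.ofReal_mul ht, ENNReal.ofReal_pow (inv_nonneg.2 (by linarith)), sq, mul_assoc]

/-- Termwise, `min (t ρ ^ (i + j)) 1 ≤ ρ ^ (i - m) * ρ ^ (j - m)` (truncated subtraction): the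
right side is `1` when `i + j ≤ m`, and dominates `t ρ ^ m * ρ ^ (i + j - m)` otherwise. -/
lemma clippedGeomSum_le_of_mul_pow_le_one (h0 : 0 ≤ ρ) (h1 : ρ < 1) {t : ℝ} {m : ℕ}
    (hm : t * ρ ^ m ≤ 1) : clippedGeomSum ρ t ≤ ENNReal.ofReal ((m + (1 - ρ)⁻¹) ^ 2) := by
  have key : ∀ i j : ℕ, min (t * ρ ^ (i + j)) 1 ≤ ρ ^ (i - m) * ρ ^ (j - m) := by
    intro i j
    rw [← pow_add]
    rcases le_or_gt (i + j) m with h | h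
    · rw [show i - m + (j - m) = 0 by omega, pow_zero]
      exact min_le_right _ _
    · calc min (t * ρ ^ (i + j)) 1 ≤ t * ρ ^ m * ρ ^ (i + j - m) := by
            rw [mul_assoc, ← pow_add, Nat.add_sub_cancel' h.le]
            exact min_le_left _ _
        _ ≤ 1 * ρ ^ (i - m + (j - m)) :=
            mul_le_mul hm (pow_le_pow_of_le_one h0 h1.le (by omega)) (by positivity) zero_le_one
        _ = ρ ^ (i - m + (j - m)) := one_mul _
  calc clippedGeomSum ρ t
      ≤ ∑' i : ℕ, ∑' j : ℕ, ENNReal.ofReal (ρ ^ (i - m)) * ENNReal.ofReal (ρ ^ (j - m)) :=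
        ENNReal.tsum_le_tsum fun i => ENNReal.tsum_le_tsum fun j => by
          rw [← ENNReal.ofReal_mul (by positivity)]
          exact ENNReal.ofReal_le_ofReal (key i j)
    _ = ENNReal.ofReal ((m + (1 - ρ)⁻¹) ^ 2) := by
        simp_rw [ENNReal.tsum_mul_left, ENNReal.tsum_mul_right, tsum_ofReal_pow_tsub h0 h1]
        rw [ENNReal.ofReal_pow (by have := inv_nonneg.2 (sub_nonneg.2 h1.le); positivity),
          ENNReal.ofReal_add (by positivity) (inv_nonneg.2 (by linarith)), ENNReal.ofReal_natCast,
          sq]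

lemma clippedGeomSum_le_log (h0 : 0 < ρ) (h1 : ρ < 1) {t : ℝ} (ht : 0 ≤ t) :
    clippedGeomSum ρ t ≤
      ENNReal.ofReal ((max (Real.log t) 0 / (-Real.log ρ) + 1 + (1 - ρ)⁻¹) ^ 2) := by
  have hlam : 0 < -Real.log ρ := neg_pos.2 (Real.log_neg h0 h1)
  set m := ⌈max (Real.log t) 0 / (-Real.log ρ)⌉₊
  have hm : t * ρ ^ m ≤ 1 := by
    rcases ht.eq_or_lt with rfl | htpos
    · simp
    rw [← Real.log_nonpos_iff (by positivity), Real.log_mul htpos.ne' (by positivity),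
      Real.log_pow]
    have hceil : max (Real.log t) 0 / (-Real.log ρ) ≤ m := Nat.le_ceil _
    have := (div_le_iff₀ hlam).1 hceil
    linarith [le_max_left (Real.log t) 0]
  refine (clippedGeomSum_le_of_mul_pow_le_one h0.le h1 hm).trans (ENNReal.ofReal_le_ofReal ?_)
  have := Nat.ceil_lt_add_one (div_nonneg (le_max_right (Real.log t) 0) hlam.le)
  have := inv_pos.2 (sub_pos.2 h1)
  gcongr

lemma sq_le_clippedGeomSum (h0 : 0 ≤ ρ) (h1 : ρ ≤ 1) {t : ℝ} {n : ℕ} (hn : 1 ≤ t * ρ ^ (2 * n)) :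
    (n : ℝ≥0∞) ^ 2 ≤ clippedGeomSum ρ t := by
  have ht : 0 ≤ t := by
    by_contra! h
    nlinarith [pow_nonneg h0 (2 * n)]
  have hone : ∀ i < n, ∀ j < n, ENNReal.ofReal (min (t * ρ ^ (i + j)) 1) = 1 := by
    intro i hi j hj
    rw [min_eq_right, ENNReal.ofReal_one]
    exact hn.trans (mul_le_mul_of_nonneg_left (pow_le_pow_of_le_one h0 h1 (by omega)) ht)
  calc (n : ℝ≥0∞) ^ 2
      = ∑ i ∈ Finset.range n, ∑ j ∈ Finset.range n, ENNReal.ofReal (min (t * ρ ^ (i + j)) 1) := by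
        rw [Finset.sum_congr rfl fun i hi => Finset.sum_congr rfl fun j hj =>
          hone i (Finset.mem_range.1 hi) j (Finset.mem_range.1 hj)]
        simp [sq]
    _ ≤ ∑ i ∈ Finset.range n, ∑' j : ℕ, ENNReal.ofReal (min (t * ρ ^ (i + j)) 1) :=
        Finset.sum_le_sum fun i _ => ENNReal.sum_le_tsum _
    _ ≤ clippedGeomSum ρ t := ENNReal.sum_le_tsum _

lemma ofReal_sq_le_clippedGeomSum (h0 : 0 < ρ) (h1 : ρ < 1) {t : ℝ} (ht : 0 < t)
    (hlog : 1 ≤ Real.log t / (2 * -Real.log ρ)) :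
    ENNReal.ofReal ((Real.log t / (2 * -Real.log ρ) - 1) ^ 2) ≤ clippedGeomSum ρ t := by
  have hlam : 0 < -Real.log ρ := neg_pos.2 (Real.log_neg h0 h1)
  set n := ⌊Real.log t / (2 * -Real.log ρ)⌋₊
  have hn : 1 ≤ t * ρ ^ (2 * n) := by
    rw [← Real.log_nonneg_iff (by positivity), Real.log_mul ht.ne' (by positivity), Real.log_pow]
    have := (le_div_iff₀ (by positivity)).1
      (Nat.floor_le (by positivity : 0 ≤ Real.log t / (2 * -Real.log ρ)))
    push_cast
    linarith
  refine le_trans ?_ (sq_le_clippedGeomSum h0.le h1.le hn)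
  rw [← ENNReal.ofReal_natCast, ← ENNReal.ofReal_pow (Nat.cast_nonneg n)]
  exact ENNReal.ofReal_le_ofReal (pow_le_pow_left₀ (by linarith) (Nat.sub_one_lt_floor _).le 2)

end clippedGeomSum

section scaled

variable {κ ρ : ℝ}

lemma clippedGeomSum_le_of_log_le (h0 : 0 < ρ) (h1 : ρ < 1) (hκ : 0 < κ) {a b : ℕ} {d : ℝ}
    (hd : 0 ≤ d) (hlog : Real.log d ≤ (max a b : ℝ) * (-Real.log ρ / 2)) :
    clippedGeomSum ρ (κ * ρ ^ (a + b) * d) ≤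
      ENNReal.ofReal (κ * ((1 - ρ)⁻¹) ^ 2 * ρ ^ (((a : ℝ) + b) / 2)) := by
  refine (clippedGeomSum_le_mul h0.le h1 (by positivity)).trans (ENNReal.ofReal_le_ofReal ?_)
  have hdecay : ρ ^ (a + b) * d ≤ ρ ^ (((a : ℝ) + b) / 2) := by
    rcases hd.eq_or_lt with rfl | hdpos
    · rw [mul_zero]; positivity
    rw [← Real.log_le_log_iff (by positivity) (by positivity), Real.log_mul (by positivity)
      hdpos.ne', Real.log_pow, Real.log_rpow h0]
    have hmax : (max a b : ℝ) ≤ a + b := max_le (by simp) (by simp)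
    have := mul_le_mul_of_nonneg_right hmax (neg_nonneg.2 (Real.log_nonpos h0.le h1.le))
    push_cast
    linarith
  calc κ * ρ ^ (a + b) * d * ((1 - ρ)⁻¹) ^ 2 = κ * ((1 - ρ)⁻¹) ^ 2 * (ρ ^ (a + b) * d) := by ring
    _ ≤ κ * ((1 - ρ)⁻¹) ^ 2 * ρ ^ (((a : ℝ) + b) / 2) := by gcongr

lemma clippedGeomSum_mul_le_log (h0 : 0 < ρ) (h1 : ρ < 1) (hκ : 0 < κ) {d : ℝ} (hd : 1 ≤ d) :
    clippedGeomSum ρ (κ * d) ≤ ENNReal.ofReal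
      ((max (Real.log κ) 0 / (-Real.log ρ) + 1 + (1 - ρ)⁻¹ + Real.log d / (-Real.log ρ)) ^ 2) := by
  have hlam : 0 < -Real.log ρ := neg_pos.2 (Real.log_neg h0 h1)
  have hlog : 0 ≤ Real.log d := Real.log_nonneg hd
  refine (clippedGeomSum_le_log h0 h1 (by positivity)).trans (ENNReal.ofReal_le_ofReal ?_)
  have hmax : max (Real.log (κ * d)) 0 ≤ max (Real.log κ) 0 + Real.log d := by
    rw [Real.log_mul hκ.ne' (by positivity)]
    exact max_le (by linarith [le_max_left (Real.log κ) 0])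
      (by linarith [le_max_right (Real.log κ) 0])
  have := div_le_div_of_nonneg_right hmax hlam.le
  rw [add_div] at this
  gcongr ?_ ^ 2
  linarith


lemma one_le_rpow_add_sq_div_of_lt (h0 : 0 < ρ) (h1 : ρ < 1) {a b : ℕ} {ℓ : ℝ}
    (hℓ : (max a b : ℝ) * (-Real.log ρ / 2) < ℓ) :
    1 ≤ ρ ^ (((a : ℝ) + b) / 2) + 4 * (ℓ / -Real.log ρ) ^ 2 := by
  have hlam : 0 < -Real.log ρ := neg_pos.2 (Real.log_neg h0 h1)
  rcases Nat.eq_zero_or_pos (max a b) with hab | hab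
  · obtain ⟨rfl, rfl⟩ : a = 0 ∧ b = 0 := by omega
    simp only [CharP.cast_eq_zero, add_zero, zero_div, Real.rpow_zero, le_add_iff_nonneg_right]
    positivity
  · have : (1 : ℝ) ≤ max (a : ℝ) (b : ℝ) := by rw [← Nat.cast_max]; exact_mod_cast hab
    have : 1 / 2 < ℓ / -Real.log ρ := by
      rw [lt_div_iff₀ hlam]; nlinarith
    nlinarith [Real.rpow_pos_of_pos h0 (((a : ℝ) + b) / 2)]

lemma exists_clippedGeomSum_le (h0 : 0 < ρ) (h1 : ρ < 1) (hκ : 0 < κ) :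
    ∃ K : ℝ, 0 < K ∧ ∀ (a b : ℕ) (d : ℝ), 0 ≤ d →
      clippedGeomSum ρ (κ * ρ ^ (a + b) * d) ≤ ENNReal.ofReal (K * ρ ^ (((a : ℝ) + b) / 2)) +
        ENNReal.ofReal K * if (max a b : ℝ) * (-Real.log ρ / 2) < Real.log d then
          ENNReal.ofReal (Real.log d ^ 2) else 0 := by
  have hlam : 0 < -Real.log ρ := neg_pos.2 (Real.log_neg h0 h1)
  have hc : 0 < (1 - ρ)⁻¹ := inv_pos.2 (sub_pos.2 h1)
  set A := max (Real.log κ) 0 / (-Real.log ρ) + 1 + (1 - ρ)⁻¹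
  have hA : 0 < A := by positivity
  set K := κ * ((1 - ρ)⁻¹) ^ 2 + 2 * A ^ 2 + (8 * A ^ 2 + 2) / (-Real.log ρ) ^ 2 with hKdef
  have hK : 0 < K := by positivity
  have hK1 : κ * ((1 - ρ)⁻¹) ^ 2 + 2 * A ^ 2 ≤ K := le_add_of_nonneg_right (by positivity)
  have hK2 : 8 * A ^ 2 + 2 ≤ K * (-Real.log ρ) ^ 2 := by
    have : (8 * A ^ 2 + 2) / (-Real.log ρ) ^ 2 * (-Real.log ρ) ^ 2 = 8 * A ^ 2 + 2 :=
      div_mul_cancel₀ _ (by positivity)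
    have : 0 ≤ (κ * ((1 - ρ)⁻¹) ^ 2 + 2 * A ^ 2) * (-Real.log ρ) ^ 2 := by positivity
    rw [hKdef, add_mul]
    linarith
  refine ⟨K, hK, fun a b d hd => ?_⟩
  have hρab : 0 < ρ ^ (((a : ℝ) + b) / 2) := by positivity
  split_ifs with hE
  · have hd1 : 1 < d := (Real.log_pos_iff hd).1 (lt_of_le_of_lt (by positivity) hE)
    set u := Real.log d / (-Real.log ρ)
    have hu : Real.log d ^ 2 = (-Real.log ρ) ^ 2 * u ^ 2 := by
      simp only [u]; field_simp [(Real.log_neg h0 h1).ne]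
    have hone : 1 ≤ ρ ^ (((a : ℝ) + b) / 2) + 4 * u ^ 2 := one_le_rpow_add_sq_div_of_lt h0 h1 hE
    calc clippedGeomSum ρ (κ * ρ ^ (a + b) * d) ≤ clippedGeomSum ρ (κ * d) := by
          refine clippedGeomSum_mono h0.le (mul_le_mul_of_nonneg_right ?_ hd)
          exact mul_le_of_le_one_right hκ.le (pow_le_one₀ h0.le h1.le)
      _ ≤ ENNReal.ofReal ((A + u) ^ 2) := clippedGeomSum_mul_le_log h0 h1 hκ hd1.le
      _ ≤ ENNReal.ofReal (K * ρ ^ (((a : ℝ) + b) / 2) + K * Real.log d ^ 2) := by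
          refine ENNReal.ofReal_le_ofReal ?_
          rw [hu]
          nlinarith [sq_nonneg (A - u), mul_le_mul_of_nonneg_right hK1 hρab.le,
            mul_le_mul_of_nonneg_right hK2 (sq_nonneg u),
            mul_le_mul_of_nonneg_left hone (by positivity : (0 : ℝ) ≤ 2 * A ^ 2),
            (by positivity : 0 ≤ κ * ((1 - ρ)⁻¹) ^ 2 * ρ ^ (((a : ℝ) + b) / 2))]
      _ = _ := by
          rw [ENNReal.ofReal_add (by positivity) (by positivity),
            ENNReal.ofReal_mul (q := Real.log d ^ 2) hK.le]
  · rw [mul_zero, add_zero]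
    refine (clippedGeomSum_le_of_log_le h0 h1 hκ hd (not_lt.1 hE)).trans
      (ENNReal.ofReal_le_ofReal ?_)
    gcongr
    linarith [sq_nonneg A]

lemma ofReal_sq_log_le_add_clippedGeomSum (h0 : 0 < ρ) (h1 : ρ < 1) (hκ : 0 < κ) (a b : ℕ)
    {d : ℝ} (hd : 1 ≤ d) :
    ENNReal.ofReal (Real.log d ^ 2) ≤
      ENNReal.ofReal ((2 * (|Real.log κ| + (a + b) * -Real.log ρ) + 4 * -Real.log ρ) ^ 2) +
        ENNReal.ofReal (16 * Real.log ρ ^ 2) * clippedGeomSum ρ (κ * ρ ^ (a + b) * d) := by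
  have hlam : 0 < -Real.log ρ := neg_pos.2 (Real.log_neg h0 h1)
  have hL : 0 ≤ Real.log d := Real.log_nonneg hd
  set C := |Real.log κ| + (a + b) * -Real.log ρ
  have hC : 0 ≤ C := by positivity
  by_cases hM : Real.log d ≤ 2 * C + 4 * -Real.log ρ
  · exact le_add_right (ENNReal.ofReal_le_ofReal (pow_le_pow_left₀ hL hM 2))
  refine le_add_left ?_
  set t := κ * ρ ^ (a + b) * d
  have ht : 0 < t := by positivity
  have hlogt : Real.log d - C ≤ Real.log t := by
    rw [Real.log_mul (by positivity) (by positivity), Real.log_mul hκ.ne' (by positivity),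
      Real.log_pow]
    push_cast
    linarith [neg_abs_le (Real.log κ)]
  set y := Real.log t / (2 * -Real.log ρ)
  have hy : Real.log t = 2 * -Real.log ρ * y := by
    simp only [y]; field_simp [(Real.log_neg h0 h1).ne]
  have hy1 : 1 ≤ y := by nlinarith
  calc ENNReal.ofReal (Real.log d ^ 2) ≤ ENNReal.ofReal (16 * Real.log ρ ^ 2 * (y - 1) ^ 2) := by
        refine ENNReal.ofReal_le_ofReal ?_
        have : Real.log d ≤ 4 * -Real.log ρ * (y - 1) := by nlinarith
        nlinarith
    _ ≤ ENNReal.ofReal (16 * Real.log ρ ^ 2) * clippedGeomSum ρ t := by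
        rw [ENNReal.ofReal_mul (by positivity)]
        gcongr
        exact ofReal_sq_le_clippedGeomSum h0 h1 ht hy1

end scaled

section measure

variable {Ω : Type*} [MeasurableSpace Ω] {μ : Measure Ω} {g X : Ω → ℝ} {κ ρ : ℝ}

lemma tsum_tsum_lintegral_eq_lintegral_clippedGeomSum (hg : Measurable g) :
    ∑' i : ℕ, ∑' j : ℕ, ∫⁻ x, ENNReal.ofReal (min (g x * ρ ^ (i + j)) 1) ∂μ =
      ∫⁻ x, clippedGeomSum ρ (g x) ∂μ := by
  have hterm : ∀ i j : ℕ, Measurable fun x => ENNReal.ofReal (min (g x * ρ ^ (i + j)) 1) :=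
    fun i j => by fun_prop
  simp_rw [← lintegral_tsum fun j => (hterm _ j).aemeasurable]
  rw [← lintegral_tsum fun i => (Measurable.tsum (hterm i)).aemeasurable]
  rfl

lemma exists_lintegral_clippedGeomSum_le [IsProbabilityMeasure μ] (hX : Measurable X)
    (h0 : 0 < ρ) (h1 : ρ < 1) (hκ : 0 < κ) :
    ∃ K : ℝ, 0 < K ∧ ∀ a b : ℕ,
      ∫⁻ x, clippedGeomSum ρ (κ * ρ ^ (a + b) * |X x|) ∂μ ≤
        ENNReal.ofReal (K * ρ ^ (((a : ℝ) + b) / 2)) +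
          ENNReal.ofReal K * ∫⁻ x in {x | (max a b : ℝ) * (-Real.log ρ / 2) < Real.log |X x|},
            ENNReal.ofReal (Real.log |X x| ^ 2) ∂μ := by
  obtain ⟨K, hK, hpt⟩ := exists_clippedGeomSum_le h0 h1 hκ
  refine ⟨K, hK, fun a b => ?_⟩
  set E := {x | (max a b : ℝ) * (-Real.log ρ / 2) < Real.log |X x|}
  have hE : MeasurableSet E := measurableSet_lt measurable_const (by fun_prop)
  have hf : Measurable fun x => ENNReal.ofReal (Real.log |X x| ^ 2) := by fun_prop
  calc ∫⁻ x, clippedGeomSum ρ (κ * ρ ^ (a + b) * |X x|) ∂μ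
      ≤ ∫⁻ x, ENNReal.ofReal (K * ρ ^ (((a : ℝ) + b) / 2)) +
          ENNReal.ofReal K * E.indicator (fun x => ENNReal.ofReal (Real.log |X x| ^ 2)) x ∂μ :=
        lintegral_mono fun x => by
          simpa only [Set.indicator_apply, E, Set.mem_ofPred_eq] using hpt a b _ (abs_nonneg _)
    _ = _ := by
        rw [lintegral_add_left measurable_const, lintegral_const_mul _ (hf.indicator hE),
          lintegral_indicator hE, lintegral_const, measure_univ, mul_one]

lemma lintegral_clippedGeomSum_eq_top [IsFiniteMeasure μ] (hX : Measurable X)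
    (h0 : 0 < ρ) (h1 : ρ < 1) (hκ : 0 < κ) (a b : ℕ)
    (htop : ∫⁻ x in {x | (max a b : ℝ) * (-Real.log ρ / 2) < Real.log |X x|},
      ENNReal.ofReal (Real.log |X x| ^ 2) ∂μ = ∞) :
    ∫⁻ x, clippedGeomSum ρ (κ * ρ ^ (a + b) * |X x|) ∂μ = ∞ := by
  set E := {x | (max a b : ℝ) * (-Real.log ρ / 2) < Real.log |X x|}
  have hE : MeasurableSet E := measurableSet_lt measurable_const (by fun_prop)
  have hlam : 0 < -Real.log ρ := neg_pos.2 (Real.log_neg h0 h1)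
  set M := 2 * (|Real.log κ| + (a + b) * -Real.log ρ) + 4 * -Real.log ρ
  have hbound : ∫⁻ x in E, ENNReal.ofReal (Real.log |X x| ^ 2) ∂μ ≤
      ENNReal.ofReal (M ^ 2) * μ E + ENNReal.ofReal (16 * Real.log ρ ^ 2) *
        ∫⁻ x, clippedGeomSum ρ (κ * ρ ^ (a + b) * |X x|) ∂μ :=
    calc ∫⁻ x in E, ENNReal.ofReal (Real.log |X x| ^ 2) ∂μ
        ≤ ∫⁻ x in E, ENNReal.ofReal (M ^ 2) + ENNReal.ofReal (16 * Real.log ρ ^ 2) *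
            clippedGeomSum ρ (κ * ρ ^ (a + b) * |X x|) ∂μ :=
          setLIntegral_mono' hE fun x hx => ofReal_sq_log_le_add_clippedGeomSum h0 h1 hκ a b
            ((Real.log_pos_iff (abs_nonneg _)).1 (lt_of_le_of_lt (by positivity) hx)).le
      _ = ENNReal.ofReal (M ^ 2) * μ E + ENNReal.ofReal (16 * Real.log ρ ^ 2) *
            ∫⁻ x in E, clippedGeomSum ρ (κ * ρ ^ (a + b) * |X x|) ∂μ := by
          rw [lintegral_add_left measurable_const, lintegral_const_mul' _ _ ENNReal.ofReal_ne_top,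
            setLIntegral_const]
      _ ≤ _ := by gcongr; exact Measure.restrict_le_self
  by_contra hfin
  rw [htop] at hbound
  exact hbound.not_gt (by finiteness)

theorem exists_tsum_tsum_integral_min_le [IsProbabilityMeasure μ] (hX : Measurable X)
    (h0 : 0 < ρ) (h1 : ρ < 1) (hκ : 0 < κ) :
    ∃ K : ℝ, 0 < K ∧ ∀ a b : ℕ,
      (∑' i : ℕ, ∑' j : ℕ, ∫ x, min (κ * ρ ^ ((a + i) + (b + j)) * |X x|) 1 ∂μ) ≤
        K * ρ ^ (((a : ℝ) + b) / 2) +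
          K * ∫ x in {x | (max a b : ℝ) * (-Real.log ρ / 2) < Real.log |X x|},
            (Real.log |X x|) ^ 2 ∂μ := by
  obtain ⟨K, hK, hupper⟩ := exists_lintegral_clippedGeomSum_le (μ := μ) hX h0 h1 hκ
  refine ⟨K, hK, fun a b => ?_⟩
  set h : ℕ → ℝ≥0∞ := fun n => ∫⁻ x, ENNReal.ofReal (min (κ * ρ ^ (a + b) * |X x| * ρ ^ n) 1) ∂μ
  have hh : ∀ n, h n ≠ ∞ := fun n => ((lintegral_mono (g := fun _ => 1) fun x =>
    ENNReal.ofReal_le_one.2 (min_le_right _ 1)).trans_lt (by simp)).ne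
  have hterm : ∀ i j : ℕ,
      ∫ x, min (κ * ρ ^ ((a + i) + (b + j)) * |X x|) 1 ∂μ = (h (i + j)).toReal := fun i j => by
    rw [integral_eq_lintegral_of_nonneg_ae (ae_of_all _ fun x => le_min (by positivity) zero_le_one)
      (by fun_prop)]
    simp only [h, pow_add]
    congr! 4 with x
    exact congrArg (min · 1) (by ring)
  rw [integral_eq_lintegral_of_nonneg_ae (ae_of_all _ fun x => sq_nonneg _)
    (by fun_prop : Measurable fun x => Real.log |X x| ^ 2).aestronglyMeasurable]
  simp_rw [hterm, ENNReal.tsum_tsum_toReal_add hh, h,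
    tsum_tsum_lintegral_eq_lintegral_clippedGeomSum
      (by fun_prop : Measurable fun x => κ * ρ ^ (a + b) * |X x|)]
  exact ENNReal.toReal_le_add_mul_toReal (by positivity) hK.le (hupper a b)
    (lintegral_clippedGeomSum_eq_top hX h0 h1 hκ a b)

end measure

theorem stmt_11_general {Ω : Type*} [MeasurableSpace Ω] (μ : Measure Ω) [IsProbabilityMeasure μ]
    (ξ ξstar : Ω → ℝ) (hmes : Measurable ξ) (hmes' : Measurable ξstar)
    (κ ρ : ℝ) (hκ : 0 < κ) (hρ : ρ ∈ Set.Ioo (0 : ℝ) 1) :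
    ∃ K : ℝ, 0 < K ∧ ∀ a b : ℕ, a ≤ b →
      (∑' i : ℕ, ∑' j : ℕ,
          ∫ x, min (κ * ρ ^ ((a + i) + (b + j)) * |ξ x - ξstar x|) 1 ∂μ) ≤
        K * ρ ^ (((a : ℝ) + b) / 2) +
          K * ∫ x in {x | (max a b : ℝ) * Real.log (ρ ^ (-(1 : ℝ) / 2)) <
              Real.log |ξ x - ξstar x|}, (Real.log |ξ x - ξstar x|) ^ 2 ∂μ := by
  have hlog : Real.log (ρ ^ (-(1 : ℝ) / 2)) = -Real.log ρ / 2 := by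
    rw [Real.log_rpow hρ.1]; ring
  obtain ⟨K, hK, hbound⟩ :=
    exists_tsum_tsum_integral_min_le (μ := μ) (hmes.sub hmes') hρ.1 hρ.2 hκ
  exact ⟨K, hK, fun a b _ => hlog ▸ hbound a b⟩

theorem stmt_11 {Ω : Type*} [MeasurableSpace Ω] (μ : Measure Ω) [IsProbabilityMeasure μ]
    (ξ ξstar : Ω → ℝ) (hmes : Measurable ξ) (hmes' : Measurable ξstar)
    (hindep : IndepFun ξ ξstar μ) (hid : IdentDistrib ξ ξstar μ μ)
    (κ ρ : ℝ) (hκ : 0 < κ) (hρ : ρ ∈ Set.Ioo (0 : ℝ) 1) :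
    ∃ K : ℝ, 0 < K ∧ ∀ a b : ℕ, a ≤ b →
      (∑' i : ℕ, ∑' j : ℕ,
          ∫ x, min (κ * ρ ^ ((a + i) + (b + j)) * |ξ x - ξstar x|) 1 ∂μ) ≤
        K * ρ ^ (((a : ℝ) + b) / 2) +
          K * ∫ x in {x | (max a b : ℝ) * Real.log (ρ ^ (-(1 : ℝ) / 2)) <
              Real.log |ξ x - ξstar x|}, (Real.log |ξ x - ξstar x|) ^ 2 ∂μ :=
  stmt_11_general μ ξ ξstar hmes hmes' κ ρ hκ hρ
end

section
/- Let (γ(k))_{k ≥ 0} be a nonincreasing sequence of nonnegative reals and let d ≥ 1 be an integer. If ∑_{k ≥ 1} k^{d-1} γ(k) < ∞, then ∑_{i_1 ≥ 0} ⋯ ∑_{i_d ≥ 0} min(γ(i_1), …, γ(i_d)) < ∞. -/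
/-!
Since `γ` is nonincreasing, the minimum of `γ (i j)` over the coordinates is `γ` of the largest
coordinate. The tuples whose largest coordinate is `m` lie in the shell `[0, m]^d \ [0, m)^d`, which
has `(m + 1)^d - m^d ≤ d (m + 1)^(d - 1)` points, so the `d`-fold series is dominated by
`∑ₘ d (m + 1)^(d - 1) γ m`, a series comparable to `∑ₖ k^(d - 1) γ k`.
-/

open Finset

theorem Antitone.apply_sup'_eq_inf'_comp {ι α β : Type*} [LinearOrder α] [LinearOrder β]
    {g : α → β} (hg : Antitone g) {s : Finset ι} (hs : s.Nonempty) (f : ι → α) :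
    g (s.sup' hs f) = s.inf' hs (g ∘ f) :=
  apply_sup'_eq_sup'_comp (γ := βᵒᵈ) hs (OrderDual.toDual ∘ g) fun a b => hg.map_sup a b

theorem summable_comp_of_card_fiber_le {α : Type*} {φ : α → ℕ} {g c : ℕ → ℝ} (hg : 0 ≤ g)
    (hφ : ∀ (s : Finset α) m, (#{a ∈ s | φ a = m} : ℝ) ≤ c m)
    (hc : Summable fun m => c m * g m) : Summable (g ∘ φ) := by
  classical
  refine summable_of_sum_le (c := ∑' m, c m * g m) (fun a => hg _) fun u => ?_
  have hcg : ∀ m, 0 ≤ c m * g m := fun m =>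
    mul_nonneg ((Nat.cast_nonneg _).trans (hφ ∅ m)) (hg m)
  calc ∑ a ∈ u, g (φ a) = ∑ m ∈ u.image φ, #{a ∈ u | φ a = m} • g m := sum_comp g φ
    _ ≤ ∑ m ∈ u.image φ, c m * g m := by
      gcongr with m
      rw [nsmul_eq_mul]
      exact mul_le_mul_of_nonneg_right (hφ u m) (hg m)
    _ ≤ ∑' m, c m * g m := hc.sum_le_tsum _ fun m _ => hcg m

theorem card_filter_sup_eq_le {ι : Type*} [Fintype ι] [Nonempty ι] (s : Finset (ι → ℕ)) (m : ℕ) :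
    #{i ∈ s | univ.sup i = m} ≤ (m + 1) ^ Fintype.card ι - m ^ Fintype.card ι := by
  classical
  have hshell : {i ∈ s | univ.sup i = m} ⊆
      Fintype.piFinset (fun _ => range (m + 1)) \ Fintype.piFinset fun _ => range m := by
    intro i hi
    obtain ⟨-, rfl⟩ := mem_filter.mp hi
    obtain ⟨j, -, hj⟩ := exists_mem_eq_sup univ univ_nonempty i
    simp only [mem_sdiff, Fintype.mem_piFinset, mem_range, Nat.lt_succ_iff, not_forall, not_lt]
    exact ⟨fun j => le_sup (mem_univ j), j, hj.le⟩
  have hcube : Fintype.piFinset (fun _ : ι => range m) ⊆ Fintype.piFinset fun _ => range (m + 1) :=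
    Fintype.piFinset_subset _ _ fun _ => range_subset_range.mpr m.le_succ
  calc #{i ∈ s | univ.sup i = m} ≤ _ := card_le_card hshell
    _ = _ := by rw [card_sdiff_of_subset hcube]; simp

theorem add_one_pow_sub_pow_le {m : ℝ} (hm : 0 ≤ m) (k : ℕ) :
    (m + 1) ^ k - m ^ k ≤ k * (m + 1) ^ (k - 1) := by
  have h := abs_pow_sub_pow_le (m + 1) m k
  rw [add_sub_cancel_left, abs_one, one_mul, abs_of_nonneg hm,
    abs_of_nonneg (a := m + 1) (by linarith), max_eq_left (by linarith)] at h
  exact (le_abs_self _).trans h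

theorem card_filter_sup_eq_le_mul_pow {ι : Type*} [Fintype ι] [Nonempty ι]
    (s : Finset (ι → ℕ)) (m : ℕ) :
    (#{i ∈ s | univ.sup i = m} : ℝ) ≤ Fintype.card ι * ((m : ℝ) + 1) ^ (Fintype.card ι - 1) := by
  have hpow : m ^ Fintype.card ι ≤ (m + 1) ^ Fintype.card ι := Nat.pow_le_pow_left m.le_succ _
  calc (#{i ∈ s | univ.sup i = m} : ℝ) ≤ ((m + 1) ^ Fintype.card ι - m ^ Fintype.card ι : ℕ) := by
        exact_mod_cast card_filter_sup_eq_le s m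
    _ = ((m : ℝ) + 1) ^ Fintype.card ι - (m : ℝ) ^ Fintype.card ι := by push_cast [hpow]; ring
    _ ≤ _ := add_one_pow_sub_pow_le m.cast_nonneg _

theorem summable_add_one_pow_mul {f : ℕ → ℝ} {n : ℕ} (hf : Summable fun k : ℕ => (k : ℝ) ^ n * f k) :
    Summable fun k : ℕ => ((k : ℝ) + 1) ^ n * f k := by
  refine (hf.norm.mul_left (2 ^ n)).of_norm_bounded_eventually_nat ?_
  filter_upwards [Filter.eventually_ge_atTop 1] with k hk
  have hk : (1 : ℝ) ≤ k := by exact_mod_cast hk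
  rw [norm_mul, norm_mul, ← mul_assoc, norm_pow, norm_pow, ← mul_pow, Real.norm_of_nonneg
    (by positivity), Real.norm_natCast]
  gcongr
  linarith

theorem stmt_14 (γ : ℕ → ℝ) (hγ0 : ∀ k, 0 ≤ γ k) (hγanti : Antitone γ)
    (d : ℕ) (hd : 1 ≤ d)
    (hsum : Summable fun k : ℕ => (k : ℝ) ^ (d - 1) * γ k) :
    Summable fun i : Fin d → ℕ =>
      Finset.univ.inf' ⟨⟨0, hd⟩, Finset.mem_univ _⟩ fun j => γ (i j) := by
  have : Nonempty (Fin d) := ⟨⟨0, hd⟩⟩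
  have hmin : ∀ i : Fin d → ℕ,
      univ.inf' ⟨⟨0, hd⟩, mem_univ _⟩ (fun j => γ (i j)) = γ (univ.sup i) := fun i => by
    rw [← sup'_eq_sup univ_nonempty, hγanti.apply_sup'_eq_inf'_comp]
    rfl
  simp_rw [hmin]
  refine summable_comp_of_card_fiber_le (φ := fun i : Fin d → ℕ => univ.sup i)
    (c := fun m => d * ((m : ℝ) + 1) ^ (d - 1)) hγ0 (fun s m => ?_) ?_
  · simpa using card_filter_sup_eq_le_mul_pow s m
  · simpa only [mul_assoc] using (summable_add_one_pow_mul hsum).mul_left (d : ℝ)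
end
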